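/- On an almost Golden Riemannian manifold, the torsion T⁰ of the first canonical connection satisfies g(T⁰(X,Y),Z) − g(T⁰(Z,Y),X) + g(T⁰(J_φ X,Y), J_φ Z) − g(T⁰(J_φ Z,Y), J_φ X) = (1/2) g(N_{J_φ}(X,Z), Y) for all vector fields X, Y, Z. -/

import Mathlib

/-- Nijenhuis tensor `N_A(X,Y) = A²[X,Y] + [AX,AY] − A[AX,Y] − A[X,AY]`. -/
def nijenhuis {V : Type*} [LieRing V] [LieAlgebra ℝ V] (A : V →ₗ[ℝ] V) (X Y : V) : V :=
  A (A ⁅X, Y⁆) + ⁅A X, A Y⁆ - A ⁅A X, Y⁆ - A ⁅X, A Y⁆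

/-- The induced almost product structure `J_φ = (1/√5)(2φ − Id)`. -/
noncomputable def inducedJ {V : Type*} [AddCommGroup V] [Module ℝ V] (φ : V →ₗ[ℝ] V) : V →ₗ[ℝ] V :=
  (Real.sqrt 5)⁻¹ • (2 • φ - LinearMap.id)

/-- The first canonical covariant derivative `∇⁰_X Y = ∇_X Y − (1/2)(∇_X J)(J Y)`. -/
noncomputable def firstCanonical {V : Type*} [AddCommGroup V] [Module ℝ V]
    (nab : V →ₗ[ℝ] V →ₗ[ℝ] V) (J : V →ₗ[ℝ] V) (X Y : V) : V :=
  nab X Y - ((1 : ℝ)/2) • (nab X (J (J Y)) - J (nab X (J Y)))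

/-- The torsion `T⁰(X,Y) = ∇⁰_X Y − ∇⁰_Y X − [X,Y]` of the first canonical connection. -/
noncomputable def torsion0 {V : Type*} [LieRing V] [LieAlgebra ℝ V]
    (nab : V →ₗ[ℝ] V →ₗ[ℝ] V) (J : V →ₗ[ℝ] V) (X Y : V) : V :=
  firstCanonical nab J X Y - firstCanonical nab J Y X - ⁅X, Y⁆

/-!
Write `(∇_X J) Y = ∇_X (J Y) - J (∇_X Y)`. For a torsion-free `∇` and `J² = 1` both sides are
expressed through `F(X, Y, Z) = g((∇_X J) Y, Z)`:
`T⁰(X, Y) = ½ J((∇_X J) Y - (∇_Y J) X)` and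
`N_J(X, Z) = (∇_{JX} J) Z - (∇_{JZ} J) X - J((∇_X J) Z - (∇_Z J) X)`.
Metricity of `∇` and `g`-symmetry of `J` make `F` symmetric in its last two arguments, and
`J² = 1` gives `F(X, J Y, Z) = -F(X, Y, J Z)`; with these the terms `F(Y, ·, ·)` cancel and
the remaining ones match `½ g(N_J(X, Z), Y)`.
-/

section CovDerivJ

variable {V A : Type*} [AddCommGroup V] [Module ℝ V] [AddCommGroup A] [Module ℝ A]

def covDerivJ (nab : V →ₗ[ℝ] V →ₗ[ℝ] V) (J : V →ₗ[ℝ] V) (X Y : V) : V :=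
  nab X (J Y) - J (nab X Y)

theorem covDerivJ_apply_J (nab : V →ₗ[ℝ] V →ₗ[ℝ] V) {J : V →ₗ[ℝ] V} (hJ : ∀ v, J (J v) = v)
    (X Y : V) : covDerivJ nab J X (J Y) = -J (covDerivJ nab J X Y) := by
  simp only [covDerivJ, hJ, map_sub]
  abel

theorem apply_covDerivJ_symm {J : V →ₗ[ℝ] V} (g : V →ₗ[ℝ] V →ₗ[ℝ] A)
    (hsym : ∀ X Y : V, g X Y = g Y X) (hJg : ∀ X Y : V, g (J X) Y = g X (J Y))
    (Dv : V → A → A) (nab : V →ₗ[ℝ] V →ₗ[ℝ] V)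
    (hmetric : ∀ X Y Z : V, Dv X (g Y Z) = g (nab X Y) Z + g Y (nab X Z)) (X Y Z : V) :
    g (covDerivJ nab J X Y) Z = g (covDerivJ nab J X Z) Y := by
  have hDg : Dv X (g (J Y) Z) = Dv X (g Y (J Z)) := congrArg (Dv X) (hJg Y Z)
  rw [hmetric, hmetric] at hDg
  simp only [covDerivJ, map_sub, LinearMap.sub_apply, hJg]
  rw [hsym Y (nab X (J Z)), hsym (J Y) (nab X Z)] at hDg
  linear_combination (norm := module) hDg

end CovDerivJ

section LieAlgebra

variable {V : Type*} [LieRing V] [LieAlgebra ℝ V] {nab : V →ₗ[ℝ] V →ₗ[ℝ] V}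
  {J : V →ₗ[ℝ] V}

theorem torsion0_eq_covDerivJ (hJ : ∀ v, J (J v) = v)
    (htf : ∀ X Y : V, nab X Y - nab Y X = ⁅X, Y⁆) (X Y : V) :
    torsion0 nab J X Y = ((1 : ℝ) / 2) • J (covDerivJ nab J X Y - covDerivJ nab J Y X) := by
  simp only [torsion0, firstCanonical, covDerivJ, hJ, map_sub]
  linear_combination (norm := module) htf X Y

theorem nijenhuis_eq_covDerivJ (hJ : ∀ v, J (J v) = v)
    (htf : ∀ X Y : V, nab X Y - nab Y X = ⁅X, Y⁆) (X Z : V) :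
    nijenhuis J X Z = covDerivJ nab J (J X) Z - covDerivJ nab J (J Z) X
      - J (covDerivJ nab J X Z - covDerivJ nab J Z X) := by
  simp only [nijenhuis, covDerivJ, hJ, map_sub, ← htf]
  abel

end LieAlgebra

theorem inducedJ_involutive {V : Type*} [AddCommGroup V] [Module ℝ V] {φ : V →ₗ[ℝ] V}
    (hφ : φ ∘ₗ φ = φ + LinearMap.id) (v : V) : inducedJ φ (inducedJ φ v) = v := by
  have hφv : φ (φ v) = φ v + v := by simpa using LinearMap.congr_fun hφ v
  have h5 : Real.sqrt 5 * Real.sqrt 5 = 5 := Real.mul_self_sqrt (by norm_num)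
  simp only [inducedJ, LinearMap.smul_apply, LinearMap.sub_apply, LinearMap.id_apply,
    two_smul, LinearMap.add_apply, map_smul, map_sub, map_add, hφv, smul_add, smul_sub]
  match_scalars <;> field_simp <;> nlinarith [h5]

theorem inducedJ_symm {V A : Type*} [AddCommGroup V] [Module ℝ V] [AddCommGroup A] [Module ℝ A]
    {φ : V →ₗ[ℝ] V} {g : V →ₗ[ℝ] V →ₗ[ℝ] A} (hpure : ∀ X Y : V, g (φ X) Y = g X (φ Y))
    (X Y : V) : g (inducedJ φ X) Y = g X (inducedJ φ Y) := by
  simp only [inducedJ, LinearMap.smul_apply, LinearMap.sub_apply, LinearMap.id_apply,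
    two_smul, LinearMap.add_apply, map_smul, map_sub, map_add, hpure]

theorem torsion0_welladapted_of_involutive {V A : Type*} [LieRing V] [LieAlgebra ℝ V]
    [AddCommGroup A] [Module ℝ A] {J : V →ₗ[ℝ] V} (hJ : ∀ v, J (J v) = v)
    (g : V →ₗ[ℝ] V →ₗ[ℝ] A) (hsym : ∀ X Y : V, g X Y = g Y X)
    (hJg : ∀ X Y : V, g (J X) Y = g X (J Y)) (Dv : V → A → A) (nab : V →ₗ[ℝ] V →ₗ[ℝ] V)
    (htf : ∀ X Y : V, nab X Y - nab Y X = ⁅X, Y⁆)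
    (hmetric : ∀ X Y Z : V, Dv X (g Y Z) = g (nab X Y) Z + g Y (nab X Z)) (X Y Z : V) :
    g (torsion0 nab J X Y) Z - g (torsion0 nab J Z Y) X
        + g (torsion0 nab J (J X) Y) (J Z) - g (torsion0 nab J (J Z) Y) (J X)
      = ((1 : ℝ) / 2) • g (nijenhuis J X Z) Y := by
  have hF (a b c : V) : g (covDerivJ nab J a b) c = g (covDerivJ nab J a c) b :=
    apply_covDerivJ_symm g hsym hJg Dv nab hmetric a b c
  have hFJ (a b c : V) : g (covDerivJ nab J a (J b)) c = -g (covDerivJ nab J a b) (J c) := by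
    rw [covDerivJ_apply_J nab hJ, map_neg, LinearMap.neg_apply, hJg]
  simp only [torsion0_eq_covDerivJ hJ htf, nijenhuis_eq_covDerivJ hJ htf, map_smul, map_sub,
    LinearMap.smul_apply, LinearMap.sub_apply, hJg, hJ]
  linear_combination (norm := module) ((1 : ℝ) / 2) • (hF Y Z (J X) + hF Y (J Z) X
    + hF X Y (J Z) + hFJ X Z Y - hF Z Y (J X) - hFJ Z X Y + hF (J X) Y Z - hF (J Z) Y X)

theorem torsion0_welladapted_identity_general {V A : Type*} [LieRing V] [LieAlgebra ℝ V]
    [CommRing A] [Algebra ℝ A]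
    (φ : V →ₗ[ℝ] V) (hφ : φ ∘ₗ φ = φ + LinearMap.id)
    (g : V →ₗ[ℝ] V →ₗ[ℝ] A) (hsym : ∀ X Y : V, g X Y = g Y X)
    (hpure : ∀ X Y : V, g (φ X) Y = g X (φ Y))
    (Dv : V → A →ₗ[ℝ] A)
    (nab : V →ₗ[ℝ] V →ₗ[ℝ] V)
    (htf : ∀ X Y : V, nab X Y - nab Y X = ⁅X, Y⁆)
    (hmetric : ∀ X Y Z : V, Dv X (g Y Z) = g (nab X Y) Z + g Y (nab X Z)) :
    ∀ X Y Z : V,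
      g (torsion0 nab (inducedJ φ) X Y) Z - g (torsion0 nab (inducedJ φ) Z Y) X
        + g (torsion0 nab (inducedJ φ) (inducedJ φ X) Y) (inducedJ φ Z)
        - g (torsion0 nab (inducedJ φ) (inducedJ φ Z) Y) (inducedJ φ X)
      = ((1 : ℝ)/2) • g (nijenhuis (inducedJ φ) X Z) Y :=
  torsion0_welladapted_of_involutive (inducedJ_involutive hφ) g hsym (inducedJ_symm hpure)
    (fun X => Dv X) nab htf hmetric

/-- On an almost Golden Riemannian manifold, the torsion `T⁰` of the first canonical
connection satisfies
`g(T⁰(X,Y),Z) − g(T⁰(Z,Y),X) + g(T⁰(J_φX,Y),J_φZ) − g(T⁰(J_φZ,Y),J_φX)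
  = (1/2) g(N_{J_φ}(X,Z), Y)`.  Here `nab` is the Levi-Civita connection of `g`. -/
theorem torsion0_welladapted_identity {V A : Type*} [LieRing V] [LieAlgebra ℝ V]
    [CommRing A] [Algebra ℝ A]
    (φ : V →ₗ[ℝ] V) (hφ : φ ∘ₗ φ = φ + LinearMap.id)
    (g : V →ₗ[ℝ] V →ₗ[ℝ] A) (hsym : ∀ X Y : V, g X Y = g Y X)
    (hpure : ∀ X Y : V, g (φ X) Y = g X (φ Y))
    (Dv : V → A →ₗ[ℝ] A) (hD : ∀ (X : V) (a b : A), Dv X (a * b) = a * Dv X b + b * Dv X a)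
    (nab : V →ₗ[ℝ] V →ₗ[ℝ] V)
    (htf : ∀ X Y : V, nab X Y - nab Y X = ⁅X, Y⁆)
    (hmetric : ∀ X Y Z : V, Dv X (g Y Z) = g (nab X Y) Z + g Y (nab X Z)) :
    ∀ X Y Z : V,
      g (torsion0 nab (inducedJ φ) X Y) Z - g (torsion0 nab (inducedJ φ) Z Y) X
        + g (torsion0 nab (inducedJ φ) (inducedJ φ X) Y) (inducedJ φ Z)
        - g (torsion0 nab (inducedJ φ) (inducedJ φ Z) Y) (inducedJ φ X)
      = ((1 : ℝ)/2) • g (nijenhuis (inducedJ φ) X Z) Y :=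
  torsion0_welladapted_identity_general φ hφ g hsym hpure Dv nab htf hmetric
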